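/- arXiv:1210.0930 — 5 statements merged into one kernel-verified Lean document; each statement's English description precedes it below -/
import Mathlib

section
/- Let K ≥ 1 and N ≥ 1 be integers, let σh², σw² > 0, and let P₁, P₀ be probability mass functions on {0,1,…,K} with P₁(ℓ) > 0 and P₀(ℓ) > 0 for all ℓ. Define g(ψ,ℓ) = (σw² + ℓσh²)^(−N) · exp(−ψ/(σw² + ℓσh²)) and Λ(ψ) = ln[ (Σ_{ℓ=0}^K g(ψ,ℓ)P₁(ℓ)) / (Σ_{ℓ=0}^K g(ψ,ℓ)P₀(ℓ)) ] for ψ ∈ ℝ. If P₁(ℓ)·P₀(ℓ−1) > P₁(ℓ−1)·P₀(ℓ) for every ℓ ∈ {1,…,K} (i.e., the log-likelihood ratio λ(ℓ) = ln[P₁(ℓ)/P₀(ℓ)] is strictly increasing), then Λ is a strictly increasing function of ψ on ℝ. -/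
/-- Proposition 1: if the ℓ-LLR is strictly increasing (i.e.
`P₁(ℓ)·P₀(ℓ-1) > P₁(ℓ-1)·P₀(ℓ)` for all `1 ≤ ℓ ≤ K`), then the LLR
`Λ(ψ)` of the received energy `ψ` over an `N`-diversity Rayleigh MAC is a
strictly increasing function of `ψ`. -/
theorem stmt_0 (K N : ℕ) (hK : 1 ≤ K) (hN : 1 ≤ N)
    (σh2 σw2 : ℝ) (hσh : 0 < σh2) (hσw : 0 < σw2)
    (P1 P0 : ℕ → ℝ)
    (hP1pos : ∀ ℓ ≤ K, 0 < P1 ℓ) (hP0pos : ∀ ℓ ≤ K, 0 < P0 ℓ)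
    (hP1sum : ∑ ℓ ∈ Finset.range (K + 1), P1 ℓ = 1)
    (hP0sum : ∑ ℓ ∈ Finset.range (K + 1), P0 ℓ = 1)
    (g : ℝ → ℕ → ℝ)
    (hg : ∀ ψ ℓ, g ψ ℓ = ((σw2 + ℓ * σh2) ^ N)⁻¹ * Real.exp (-ψ / (σw2 + ℓ * σh2)))
    (Λ : ℝ → ℝ)
    (hΛ : ∀ ψ, Λ ψ = Real.log ((∑ ℓ ∈ Finset.range (K + 1), g ψ ℓ * P1 ℓ) /
                                 (∑ ℓ ∈ Finset.range (K + 1), g ψ ℓ * P0 ℓ)))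
    (hLLR : ∀ ℓ, 1 ≤ ℓ → ℓ ≤ K → P1 ℓ * P0 (ℓ - 1) > P1 (ℓ - 1) * P0 ℓ) :
    StrictMono Λ := by
  have hs : ∀ ℓ : ℕ, (0:ℝ) < σw2 + ℓ * σh2 := fun ℓ => by positivity
  have hgpos : ∀ ψ ℓ, 0 < g ψ ℓ := fun ψ ℓ => by
    rw [hg]
    have := hs ℓ
    positivity
  -- strict monotonicity of the ℓ-LLR extended to all pairs
  have hr : ∀ m ℓ, m < ℓ → ℓ ≤ K → P1 m * P0 ℓ < P1 ℓ * P0 m := by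
    intro m ℓ
    induction ℓ with
    | zero => omega
    | succ n ih =>
      intro hm hn
      have step : P1 n * P0 (n+1) < P1 (n+1) * P0 n := by
        have := hLLR (n+1) (by omega) hn
        simpa using this
      rcases Nat.lt_succ_iff_lt_or_eq.mp hm with h | h
      · have h1 := ih h (by omega)
        have hp1n := hP1pos n (by omega)
        have hp0n := hP0pos n (by omega)
        have hp1m := hP1pos m (by omega)
        have hp0m := hP0pos m (by omega)
        have hp1s := hP1pos (n+1) hn
        have hp0s := hP0pos (n+1) hn
        nlinarith [mul_pos hp1n hp0n, mul_lt_mul_of_pos_right h1 hp0s,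
          mul_lt_mul_of_pos_right step hp0m]
      · subst h; exact step
  intro x y hxy
  -- cross inequality for g
  have hgc : ∀ m ℓ : ℕ, m < ℓ → g x ℓ * g y m < g y ℓ * g x m := by
    intro m ℓ hmℓ
    have ha := hs m
    have hb := hs ℓ
    have hab : σw2 + (m:ℝ) * σh2 < σw2 + (ℓ:ℝ) * σh2 := by
      have : (m:ℝ) < ℓ := by exact_mod_cast hmℓ
      nlinarith
    rw [hg, hg, hg, hg]
    set a := σw2 + (m:ℝ) * σh2
    set b := σw2 + (ℓ:ℝ) * σh2
    have hexp : Real.exp (-x / b) * Real.exp (-y / a)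
        < Real.exp (-y / b) * Real.exp (-x / a) := by
      rw [← Real.exp_add, ← Real.exp_add]
      apply Real.exp_lt_exp.mpr
      have h1 : (y - x) / b < (y - x) / a :=
        div_lt_div_of_pos_left (by linarith) ha hab
      rw [sub_div, sub_div] at h1
      have hxb : -x / b = -(x/b) := by ring
      have hyb : -y / b = -(y/b) := by ring
      have hxa : -x / a = -(x/a) := by ring
      have hya : -y / a = -(y/a) := by ring
      rw [hxb, hyb, hxa, hya]
      linarith
    have hcb : (0:ℝ) < (b ^ N)⁻¹ := by positivity
    have hca : (0:ℝ) < (a ^ N)⁻¹ := by positivity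
    calc (b ^ N)⁻¹ * Real.exp (-x / b) * ((a ^ N)⁻¹ * Real.exp (-y / a))
        = (b ^ N)⁻¹ * (a ^ N)⁻¹ * (Real.exp (-x / b) * Real.exp (-y / a)) := by ring
      _ < (b ^ N)⁻¹ * (a ^ N)⁻¹ * (Real.exp (-y / b) * Real.exp (-x / a)) := by
          exact mul_lt_mul_of_pos_left hexp (by positivity)
      _ = (b ^ N)⁻¹ * Real.exp (-y / b) * ((a ^ N)⁻¹ * Real.exp (-x / a)) := by ring
  have R := Finset.range (K+1)
  -- positivity of the antisymmetrized double sum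
  have hGnonneg : ∀ ℓ ∈ Finset.range (K+1), ∀ m ∈ Finset.range (K+1),
      0 ≤ (P1 ℓ * P0 m - P1 m * P0 ℓ) * (g y ℓ * g x m - g x ℓ * g y m) := by
    intro ℓ hℓ m hm
    simp only [Finset.mem_range] at hℓ hm
    rcases lt_trichotomy m ℓ with h | h | h
    · exact le_of_lt (mul_pos (sub_pos.mpr (hr m ℓ h (by omega)))
        (sub_pos.mpr (hgc m ℓ h)))
    · subst h; simp
    · have hpos := mul_pos (sub_pos.mpr (hr ℓ m h (by omega)))
        (sub_pos.mpr (hgc ℓ m h))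
      nlinarith [hpos]
  have hGpos10 : 0 < (P1 1 * P0 0 - P1 0 * P0 1) * (g y 1 * g x 0 - g x 1 * g y 0) :=
    mul_pos (sub_pos.mpr (hr 0 1 (by omega) hK)) (sub_pos.mpr (hgc 0 1 (by omega)))
  have hGsum : 0 < ∑ ℓ ∈ Finset.range (K+1), ∑ m ∈ Finset.range (K+1),
      (P1 ℓ * P0 m - P1 m * P0 ℓ) * (g y ℓ * g x m - g x ℓ * g y m) := by
    apply Finset.sum_pos'
    · intro ℓ hℓ
      exact Finset.sum_nonneg (fun m hm => hGnonneg ℓ hℓ m hm)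
    · refine ⟨1, Finset.mem_range.mpr (by omega), ?_⟩
      apply Finset.sum_pos'
      · intro m hm; exact hGnonneg 1 (Finset.mem_range.mpr (by omega)) m hm
      · exact ⟨0, Finset.mem_range.mpr (by omega), hGpos10⟩
  -- rewrite the double sum
  have e1 : ∑ ℓ ∈ Finset.range (K+1), ∑ m ∈ Finset.range (K+1),
      (P1 ℓ * P0 m - P1 m * P0 ℓ) * (g y ℓ * g x m - g x ℓ * g y m)
      = 2 * ((∑ ℓ ∈ Finset.range (K+1), g y ℓ * P1 ℓ) * (∑ ℓ ∈ Finset.range (K+1), g x ℓ * P0 ℓ)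
           - (∑ ℓ ∈ Finset.range (K+1), g x ℓ * P1 ℓ) * (∑ ℓ ∈ Finset.range (K+1), g y ℓ * P0 ℓ)) := by
    have split : ∑ ℓ ∈ Finset.range (K+1), ∑ m ∈ Finset.range (K+1),
        (P1 ℓ * P0 m - P1 m * P0 ℓ) * (g y ℓ * g x m - g x ℓ * g y m)
        = (∑ ℓ ∈ Finset.range (K+1), ∑ m ∈ Finset.range (K+1),
            P1 ℓ * P0 m * (g y ℓ * g x m - g x ℓ * g y m))
        + (∑ ℓ ∈ Finset.range (K+1), ∑ m ∈ Finset.range (K+1),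
            P1 m * P0 ℓ * (g y m * g x ℓ - g x m * g y ℓ)) := by
      rw [← Finset.sum_add_distrib]
      apply Finset.sum_congr rfl; intro ℓ _
      rw [← Finset.sum_add_distrib]
      apply Finset.sum_congr rfl; intro m _
      ring
    have swap : (∑ ℓ ∈ Finset.range (K+1), ∑ m ∈ Finset.range (K+1),
            P1 m * P0 ℓ * (g y m * g x ℓ - g x m * g y ℓ))
        = (∑ ℓ ∈ Finset.range (K+1), ∑ m ∈ Finset.range (K+1),
            P1 ℓ * P0 m * (g y ℓ * g x m - g x ℓ * g y m)) :=
      Finset.sum_comm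
    have prod : (∑ ℓ ∈ Finset.range (K+1), ∑ m ∈ Finset.range (K+1),
            P1 ℓ * P0 m * (g y ℓ * g x m - g x ℓ * g y m))
        = (∑ ℓ ∈ Finset.range (K+1), g y ℓ * P1 ℓ) * (∑ ℓ ∈ Finset.range (K+1), g x ℓ * P0 ℓ)
           - (∑ ℓ ∈ Finset.range (K+1), g x ℓ * P1 ℓ) * (∑ ℓ ∈ Finset.range (K+1), g y ℓ * P0 ℓ) := by
      rw [Finset.sum_mul_sum, Finset.sum_mul_sum, ← Finset.sum_sub_distrib]
      apply Finset.sum_congr rfl; intro ℓ _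
      rw [← Finset.sum_sub_distrib]
      apply Finset.sum_congr rfl; intro m _
      ring
    rw [split, swap, prod]; ring
  have key : (∑ ℓ ∈ Finset.range (K+1), g x ℓ * P1 ℓ) * (∑ ℓ ∈ Finset.range (K+1), g y ℓ * P0 ℓ)
      < (∑ ℓ ∈ Finset.range (K+1), g y ℓ * P1 ℓ) * (∑ ℓ ∈ Finset.range (K+1), g x ℓ * P0 ℓ) := by
    rw [e1] at hGsum; linarith
  have hSpos : ∀ (ψ : ℝ) (P : ℕ → ℝ), (∀ ℓ ≤ K, 0 < P ℓ) →
      0 < ∑ ℓ ∈ Finset.range (K+1), g ψ ℓ * P ℓ := by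
    intro ψ P hP
    apply Finset.sum_pos
    · intro ℓ hℓ
      exact mul_pos (hgpos ψ ℓ) (hP ℓ (by simpa [Nat.lt_succ_iff] using hℓ))
    · exact ⟨0, Finset.mem_range.mpr (by omega)⟩
  have hS1x := hSpos x P1 hP1pos
  have hS0x := hSpos x P0 hP0pos
  have hS1y := hSpos y P1 hP1pos
  have hS0y := hSpos y P0 hP0pos
  rw [hΛ, hΛ]
  apply Real.log_lt_log (div_pos hS1x hS0x)
  rw [div_lt_div_iff₀ hS0x hS0y]
  exact key
end

section
/- Let K ≥ 1 be an integer and let P_{D,k}, P_{F,k} ∈ (0,1) satisfy P_{D,k} > P_{F,k} for every k ∈ {1,…,K}. Define the Poisson-Binomial pmfs P₁(ℓ) = Σ_{S ⊆ {1,…,K}, |S| = ℓ} Π_{k∈S} P_{D,k} · Π_{k∉S} (1 − P_{D,k}) and P₀(ℓ) = Σ_{S ⊆ {1,…,K}, |S| = ℓ} Π_{k∈S} P_{F,k} · Π_{k∉S} (1 − P_{F,k}) for ℓ ∈ {0,…,K}. Then P₁(ℓ)·P₀(ℓ−1) > P₁(ℓ−1)·P₀(ℓ) for every ℓ ∈ {1,…,K},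 i.e., the log-likelihood ratio λ(ℓ) = ln[P₁(ℓ)/P₀(ℓ)] is strictly increasing in ℓ. -/
/-!
Adding a sensor with probability `p` turns a pmf `f` into `F ℓ = p f (ℓ - 1) + (1 - p) f ℓ`.
For two such mixtures `F` (of `f`, with `p`) and `G` (of `g`, with `q`),
`F ℓ G (ℓ - 1) - F (ℓ - 1) G ℓ = p q t₁ + (1 - p) (1 - q) t₂ + (1 - p) q t₃ + (p - q) t₄`,
where `t₁, t₂` are the likelihood-ratio differences `f m g (m - 1) - f (m - 1) g m` at
`m = ℓ - 1, ℓ`, and `t₃ = f ℓ g (ℓ - 2) - f (ℓ - 2) g ℓ`, `t₄ = f (ℓ - 1) g (ℓ - 1) - f (ℓ - 2) g ℓ`.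
The lag-two differences `t₃, t₄` follow from the lag-one ones (and, for `t₄`, from the
log-concavity of `g`) by chaining ratios through terms that are positive on the support
`[0, #s]`; so induction on the set of sensors gives the monotone likelihood ratio, strictly via
`t₂` for `ℓ ≤ #s` and via `t₄` at `ℓ = #s + 1`. Log-concavity comes from the same expansion
with `q = p`, applied to `f` and its shift.
-/

open Finset

section PoissonBinomial

variable {ι : Type*} [DecidableEq ι]

/-- Indexed by `ℤ` and extended by zero, so that `ℓ - 1` is never truncated. -/
def poissonBinomial (p : ι → ℝ) (s : Finset ι) (ℓ : ℤ) : ℝ :=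
  if ℓ < 0 then 0
  else ∑ S ∈ s.powersetCard ℓ.toNat, (∏ k ∈ S, p k) * ∏ k ∈ s \ S, (1 - p k)

variable {p q : ι → ℝ} {s : Finset ι} {a : ι}

theorem poissonBinomial_natCast (p : ι → ℝ) (s : Finset ι) (ℓ : ℕ) :
    poissonBinomial p s ℓ =
      ∑ S ∈ s.powersetCard ℓ, (∏ k ∈ S, p k) * ∏ k ∈ s \ S, (1 - p k) := by
  simp [poissonBinomial]

theorem poissonBinomial_of_neg {ℓ : ℤ} (h : ℓ < 0) : poissonBinomial p s ℓ = 0 := if_pos h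

theorem poissonBinomial_of_card_lt {ℓ : ℤ} (h : #s < ℓ) : poissonBinomial p s ℓ = 0 := by
  lift ℓ to ℕ using by omega
  rw [poissonBinomial_natCast, powersetCard_eq_empty.2 (by omega), sum_empty]

theorem poissonBinomial_pos (hp : ∀ k ∈ s, p k ∈ Set.Ioo 0 1) {ℓ : ℤ} (h₀ : 0 ≤ ℓ)
    (h : ℓ ≤ #s) : 0 < poissonBinomial p s ℓ := by
  lift ℓ to ℕ using h₀
  rw [poissonBinomial_natCast]
  refine sum_pos (fun S hS => mul_pos (prod_pos fun k hk => ?_) (prod_pos fun k hk => ?_))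
    (powersetCard_nonempty.2 (by omega))
  · exact (hp k ((mem_powersetCard.1 hS).1 hk)).1
  · exact sub_pos.2 (hp k (mem_sdiff.1 hk).1).2

theorem poissonBinomial_nonneg (hp : ∀ k ∈ s, p k ∈ Set.Ioo 0 1) (ℓ : ℤ) :
    0 ≤ poissonBinomial p s ℓ := by
  by_cases h₀ : ℓ < 0
  · rw [poissonBinomial_of_neg h₀]
  by_cases h : #s < ℓ
  · rw [poissonBinomial_of_card_lt h]
  exact (poissonBinomial_pos hp (by omega) (by omega)).le

theorem poissonBinomial_insert_natCast_succ (ha : a ∉ s) (p : ι → ℝ) (m : ℕ) :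
    poissonBinomial p (insert a s) (m + 1 : ℕ) =
      p a * poissonBinomial p s m + (1 - p a) * poissonBinomial p s (m + 1 : ℕ) := by
  simp only [poissonBinomial_natCast, powersetCard_eq_filter, sum_filter, sum_powerset_insert ha,
    mul_sum, ← sum_add_distrib]
  refine sum_congr rfl fun S hS => ?_
  have haS : a ∉ S := fun h => ha (mem_powerset.1 hS h)
  rw [card_insert_of_notMem haS, insert_sdiff_insert, sdiff_insert_of_notMem ha,
    insert_sdiff_of_notMem _ haS, prod_insert haS, prod_insert (notMem_mono sdiff_subset ha)]
  split_ifs <;> first | omega | ring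

theorem poissonBinomial_insert (ha : a ∉ s) (p : ι → ℝ) (ℓ : ℤ) :
    poissonBinomial p (insert a s) ℓ =
      p a * poissonBinomial p s (ℓ - 1) + (1 - p a) * poissonBinomial p s ℓ := by
  rcases lt_trichotomy ℓ 0 with h | rfl | h
  · rw [poissonBinomial_of_neg h, poissonBinomial_of_neg h, poissonBinomial_of_neg (by omega)]
    ring
  · simp [poissonBinomial, prod_insert ha]
  · obtain ⟨m, rfl⟩ : ∃ m : ℕ, ℓ = (m + 1 : ℕ) := ⟨ℓ.toNat - 1, by omega⟩
    rw [poissonBinomial_insert_natCast_succ ha]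
    congr 3
    omega

theorem poissonBinomial_mul_eq_zero {i j : ℤ} (h : i < 0 ∨ #s < j) :
    poissonBinomial p s i * poissonBinomial q s j = 0 := by
  rcases h with h | h
  · rw [poissonBinomial_of_neg h, zero_mul]
  · rw [poissonBinomial_of_card_lt h, mul_zero]

-- `a / y ≤ c / x` times `b / x ≤ d / y`
theorem mul_le_mul_of_cross {a b c d x y : ℝ} (hb : 0 ≤ b) (hc : 0 ≤ c) (hx : 0 < x)
    (hy : 0 < y) (h₁ : a * x ≤ c * y) (h₂ : y * b ≤ x * d) : a * b ≤ c * d := by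
  refine le_of_mul_le_mul_right ?_ (mul_pos hx hy)
  calc a * b * (x * y) = a * x * (y * b) := by ring
    _ ≤ c * y * (x * d) := mul_le_mul h₁ h₂ (mul_nonneg hy.le hb) (mul_nonneg hc hy.le)
    _ = c * d * (x * y) := by ring

theorem poissonBinomial_mul_le_mul_of_cross (hq : ∀ k ∈ s, q k ∈ Set.Ioo 0 1) {i j : ℤ}
    {c d x y : ℝ} (hc : 0 ≤ c) (hd : 0 ≤ d) (hxy : 0 ≤ i → j ≤ #s → 0 < x ∧ 0 < y)
    (h₁ : poissonBinomial p s i * x ≤ c * y) (h₂ : y * poissonBinomial q s j ≤ x * d) :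
    poissonBinomial p s i * poissonBinomial q s j ≤ c * d := by
  by_cases h : i < 0 ∨ #s < j
  · rw [poissonBinomial_mul_eq_zero h]
    exact mul_nonneg hc hd
  obtain ⟨hx, hy⟩ := hxy (by omega) (by omega)
  exact mul_le_mul_of_cross (poissonBinomial_nonneg hq j) hc hx hy h₁ h₂

theorem poissonBinomial_sub_two_mul_add_one_le_sub_one_mul (hp : ∀ k ∈ s, p k ∈ Set.Ioo 0 1)
    (hlc : ∀ ℓ, poissonBinomial p s (ℓ - 1) * poissonBinomial p s (ℓ + 1) ≤
      poissonBinomial p s ℓ ^ 2) (ℓ : ℤ) :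
    poissonBinomial p s (ℓ - 2) * poissonBinomial p s (ℓ + 1) ≤
      poissonBinomial p s (ℓ - 1) * poissonBinomial p s ℓ := by
  have h₁ := hlc (ℓ - 1)
  rw [sub_sub, one_add_one_eq_two, sub_add_cancel] at h₁
  refine poissonBinomial_mul_le_mul_of_cross hp (poissonBinomial_nonneg hp _)
    (poissonBinomial_nonneg hp _) (fun h₀ h => ?_) (by simpa [sq] using h₁)
    (by simpa [sq] using hlc ℓ)
  exact ⟨poissonBinomial_pos hp (by omega) (by omega), poissonBinomial_pos hp (by omega) (by omega)⟩

theorem poissonBinomial_mul_le_sq (hp : ∀ k ∈ s, p k ∈ Set.Ioo 0 1) (ℓ : ℤ) :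
    poissonBinomial p s (ℓ - 1) * poissonBinomial p s (ℓ + 1) ≤ poissonBinomial p s ℓ ^ 2 := by
  induction s using Finset.induction_on generalizing ℓ with
  | empty =>
    rw [poissonBinomial_mul_eq_zero (by rw [card_empty]; omega)]
    positivity
  | insert a s ha ih =>
    obtain ⟨hpa₀, hpa₁⟩ := hp a (mem_insert_self a s)
    have hs : ∀ k ∈ s, p k ∈ Set.Ioo 0 1 := fun k hk => hp k (mem_insert_of_mem hk)
    have h₁ := ih hs (ℓ - 1)
    rw [sub_sub, one_add_one_eq_two, sub_add_cancel] at h₁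
    have h₂ := ih hs ℓ
    have h₃ := poissonBinomial_sub_two_mul_add_one_le_sub_one_mul hs (ih hs) ℓ
    rw [poissonBinomial_insert ha, poissonBinomial_insert ha, poissonBinomial_insert ha,
      sub_sub, one_add_one_eq_two, add_sub_cancel_right]
    linarith [mul_nonneg (sq_nonneg (p a)) (sub_nonneg.2 h₁),
      mul_nonneg (sq_nonneg (1 - p a)) (sub_nonneg.2 h₂),
      mul_nonneg (mul_nonneg hpa₀.le (sub_nonneg.2 hpa₁.le)) (sub_nonneg.2 h₃)]

theorem poissonBinomial_sub_two_mul_le_sub_one_mul (hq : ∀ k ∈ s, q k ∈ Set.Ioo 0 1)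
    (hp : ∀ k ∈ s, p k ∈ Set.Ioo 0 1)
    (hw : ∀ ℓ, poissonBinomial p s (ℓ - 1) * poissonBinomial q s ℓ ≤
      poissonBinomial p s ℓ * poissonBinomial q s (ℓ - 1)) (ℓ : ℤ) :
    poissonBinomial p s (ℓ - 2) * poissonBinomial q s ℓ ≤
      poissonBinomial p s (ℓ - 1) * poissonBinomial q s (ℓ - 1) := by
  have h₁ := hw (ℓ - 1)
  rw [sub_sub, one_add_one_eq_two] at h₁
  have h₂ := poissonBinomial_mul_le_sq hq (ℓ - 1)
  rw [sub_sub, one_add_one_eq_two, sub_add_cancel, sq] at h₂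
  refine poissonBinomial_mul_le_mul_of_cross hq (poissonBinomial_nonneg hp _)
    (poissonBinomial_nonneg hq _) (fun h₀ h => ?_) h₁ h₂
  exact ⟨poissonBinomial_pos hq (by omega) (by omega), poissonBinomial_pos hq (by omega) (by omega)⟩

theorem poissonBinomial_sub_two_mul_le_mul_sub_two (hq : ∀ k ∈ s, q k ∈ Set.Ioo 0 1)
    (hp : ∀ k ∈ s, p k ∈ Set.Ioo 0 1)
    (hw : ∀ ℓ, poissonBinomial p s (ℓ - 1) * poissonBinomial q s ℓ ≤
      poissonBinomial p s ℓ * poissonBinomial q s (ℓ - 1)) (ℓ : ℤ) :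
    poissonBinomial p s (ℓ - 2) * poissonBinomial q s ℓ ≤
      poissonBinomial p s ℓ * poissonBinomial q s (ℓ - 2) := by
  have h₁ := hw (ℓ - 1)
  rw [sub_sub, one_add_one_eq_two] at h₁
  rw [mul_comm (poissonBinomial p s ℓ)]
  refine poissonBinomial_mul_le_mul_of_cross (x := poissonBinomial q s (ℓ - 1))
    (y := poissonBinomial p s (ℓ - 1)) hq (poissonBinomial_nonneg hq _)
    (poissonBinomial_nonneg hp _) (fun h₀ h => ?_) (by linarith) (by linarith [hw ℓ])
  exact ⟨poissonBinomial_pos hq (by omega) (by omega), poissonBinomial_pos hp (by omega) (by omega)⟩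

theorem le_poissonBinomial_insert_cross_sub (ha : a ∉ s) (hq : ∀ k ∈ s, q k ∈ Set.Ioo 0 1)
    (hp : ∀ k ∈ s, p k ∈ Set.Ioo 0 1)
    (hw : ∀ ℓ, poissonBinomial p s (ℓ - 1) * poissonBinomial q s ℓ ≤
      poissonBinomial p s ℓ * poissonBinomial q s (ℓ - 1))
    (hpa₀ : 0 ≤ p a) (hpa₁ : p a ≤ 1) (hqa : 0 ≤ q a) (ℓ : ℤ) :
    (1 - p a) * (1 - q a) *
        (poissonBinomial p s ℓ * poissonBinomial q s (ℓ - 1) -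
          poissonBinomial p s (ℓ - 1) * poissonBinomial q s ℓ) +
      (p a - q a) * (poissonBinomial p s (ℓ - 1) * poissonBinomial q s (ℓ - 1) -
          poissonBinomial p s (ℓ - 2) * poissonBinomial q s ℓ) ≤
    poissonBinomial p (insert a s) ℓ * poissonBinomial q (insert a s) (ℓ - 1) -
      poissonBinomial p (insert a s) (ℓ - 1) * poissonBinomial q (insert a s) ℓ := by
  have h₁ := hw (ℓ - 1)
  rw [sub_sub, one_add_one_eq_two] at h₁
  have h₃ := poissonBinomial_sub_two_mul_le_mul_sub_two hq hp hw ℓ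
  rw [poissonBinomial_insert ha p, poissonBinomial_insert ha p, poissonBinomial_insert ha q,
    poissonBinomial_insert ha q, sub_sub, one_add_one_eq_two]
  linarith [mul_nonneg (mul_nonneg hpa₀ hqa) (sub_nonneg.2 h₁),
    mul_nonneg (mul_nonneg (sub_nonneg.2 hpa₁) hqa) (sub_nonneg.2 h₃)]

theorem poissonBinomial_mul_le_mul (hq : ∀ k ∈ s, q k ∈ Set.Ioo 0 1)
    (hp : ∀ k ∈ s, p k ∈ Set.Ioo 0 1) (hqp : ∀ k ∈ s, q k ≤ p k) (ℓ : ℤ) :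
    poissonBinomial p s (ℓ - 1) * poissonBinomial q s ℓ ≤
      poissonBinomial p s ℓ * poissonBinomial q s (ℓ - 1) := by
  induction s using Finset.induction_on generalizing ℓ with
  | empty =>
    rw [poissonBinomial_mul_eq_zero (by rw [card_empty]; omega)]
    exact mul_nonneg (poissonBinomial_nonneg hp _) (poissonBinomial_nonneg hq _)
  | insert a s ha ih =>
    obtain ⟨hqa₀, hqa₁⟩ := hq a (mem_insert_self a s)
    obtain ⟨hpa₀, hpa₁⟩ := hp a (mem_insert_self a s)
    have hqs : ∀ k ∈ s, q k ∈ Set.Ioo 0 1 := fun k hk => hq k (mem_insert_of_mem hk)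
    have hps : ∀ k ∈ s, p k ∈ Set.Ioo 0 1 := fun k hk => hp k (mem_insert_of_mem hk)
    have hw := ih hqs hps fun k hk => hqp k (mem_insert_of_mem hk)
    linarith [le_poissonBinomial_insert_cross_sub ha hqs hps hw hpa₀.le hpa₁.le hqa₀.le ℓ,
      mul_nonneg (mul_nonneg (sub_nonneg.2 hpa₁.le) (sub_nonneg.2 hqa₁.le)) (sub_nonneg.2 (hw ℓ)),
      mul_nonneg (sub_nonneg.2 (hqp a (mem_insert_self a s)))
        (sub_nonneg.2 (poissonBinomial_sub_two_mul_le_sub_one_mul hqs hps hw ℓ))]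

theorem poissonBinomial_mul_lt_mul (hq : ∀ k ∈ s, q k ∈ Set.Ioo 0 1)
    (hp : ∀ k ∈ s, p k ∈ Set.Ioo 0 1) (hqp : ∀ k ∈ s, q k < p k) {ℓ : ℤ} (h₁ : 1 ≤ ℓ)
    (h₂ : ℓ ≤ #s) :
    poissonBinomial p s (ℓ - 1) * poissonBinomial q s ℓ <
      poissonBinomial p s ℓ * poissonBinomial q s (ℓ - 1) := by
  induction s using Finset.induction_on generalizing ℓ with
  | empty => rw [card_empty] at h₂; omega
  | insert a s ha ih =>
    obtain ⟨hqa₀, hqa₁⟩ := hq a (mem_insert_self a s)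
    obtain ⟨hpa₀, hpa₁⟩ := hp a (mem_insert_self a s)
    have hqpa := sub_pos.2 (hqp a (mem_insert_self a s))
    have hqs : ∀ k ∈ s, q k ∈ Set.Ioo 0 1 := fun k hk => hq k (mem_insert_of_mem hk)
    have hps : ∀ k ∈ s, p k ∈ Set.Ioo 0 1 := fun k hk => hp k (mem_insert_of_mem hk)
    have hqps : ∀ k ∈ s, q k < p k := fun k hk => hqp k (mem_insert_of_mem hk)
    have hw := poissonBinomial_mul_le_mul hqs hps fun k hk => (hqps k hk).le
    have h₄ := poissonBinomial_sub_two_mul_le_sub_one_mul hqs hps hw ℓ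
    have hpq := mul_pos (sub_pos.2 hpa₁) (sub_pos.2 hqa₁)
    have key := le_poissonBinomial_insert_cross_sub ha hqs hps hw hpa₀.le hpa₁.le hqa₀.le ℓ
    rw [card_insert_of_notMem ha] at h₂
    rcases h₂.lt_or_eq with h₂ | h₂
    · linarith [mul_pos hpq (sub_pos.2 (ih hqs hps hqps h₁ (by omega))),
        mul_nonneg hqpa.le (sub_nonneg.2 h₄)]
    · have hf := poissonBinomial_pos hps (ℓ := ℓ - 1) (by omega) (by omega)
      have hg := poissonBinomial_pos hqs (ℓ := ℓ - 1) (by omega) (by omega)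
      rw [poissonBinomial_of_card_lt (p := p) (ℓ := ℓ) (by omega),
        poissonBinomial_of_card_lt (p := q) (ℓ := ℓ) (by omega)] at key
      linarith [mul_pos hqpa (mul_pos hf hg)]

end PoissonBinomial

theorem stmt_4_general (K : ℕ) (PD PF : ℕ → ℝ)
    (hPF : ∀ k < K, 0 < PF k) (hPD : ∀ k < K, PD k < 1)
    (hDF : ∀ k < K, PF k < PD k)
    (P1 P0 : ℕ → ℝ)
    (hP1 : ∀ ℓ, P1 ℓ = ∑ S ∈ (Finset.range K).powersetCard ℓ,
        (∏ k ∈ S, PD k) * ∏ k ∈ Finset.range K \ S, (1 - PD k))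
    (hP0 : ∀ ℓ, P0 ℓ = ∑ S ∈ (Finset.range K).powersetCard ℓ,
        (∏ k ∈ S, PF k) * ∏ k ∈ Finset.range K \ S, (1 - PF k)) :
    ∀ ℓ, 1 ≤ ℓ → ℓ ≤ K → P1 ℓ * P0 (ℓ - 1) > P1 (ℓ - 1) * P0 ℓ := by
  intro ℓ h₁ h₂
  have hD : ∀ k ∈ range K, PD k ∈ Set.Ioo 0 1 := fun k hk =>
    ⟨(hPF k (mem_range.1 hk)).trans (hDF k (mem_range.1 hk)), hPD k (mem_range.1 hk)⟩
  have hF : ∀ k ∈ range K, PF k ∈ Set.Ioo 0 1 := fun k hk =>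
    ⟨hPF k (mem_range.1 hk), (hDF k (mem_range.1 hk)).trans (hPD k (mem_range.1 hk))⟩
  have h := poissonBinomial_mul_lt_mul hF hD (fun k hk => hDF k (mem_range.1 hk))
    (ℓ := ℓ) (by omega) (by simpa using h₂)
  rw [show (ℓ : ℤ) - 1 = (ℓ - 1 : ℕ) by omega] at h
  simp only [poissonBinomial_natCast, ← hP1, ← hP0] at h
  linarith

/-- Theorem 2: for conditionally mutually independent but non-identically
distributed sensors with `P_{D,k} > P_{F,k}` for all `k`, the Poisson-Binomial
pmfs of the number of active sensors have a strictly increasing likelihood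
ratio. -/
theorem stmt_4 (K : ℕ) (hK : 1 ≤ K) (PD PF : ℕ → ℝ)
    (hPF : ∀ k < K, 0 < PF k) (hPD : ∀ k < K, PD k < 1)
    (hDF : ∀ k < K, PF k < PD k)
    (P1 P0 : ℕ → ℝ)
    (hP1 : ∀ ℓ, P1 ℓ = ∑ S ∈ (Finset.range K).powersetCard ℓ,
        (∏ k ∈ S, PD k) * ∏ k ∈ Finset.range K \ S, (1 - PD k))
    (hP0 : ∀ ℓ, P0 ℓ = ∑ S ∈ (Finset.range K).powersetCard ℓ,
        (∏ k ∈ S, PF k) * ∏ k ∈ Finset.range K \ S, (1 - PF k)) :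
    ∀ ℓ, 1 ≤ ℓ → ℓ ≤ K → P1 ℓ * P0 (ℓ - 1) > P1 (ℓ - 1) * P0 ℓ :=
  stmt_4_general K PD PF hPF hPD hDF P1 P0 hP1 hP0
end

section
/- Let K ≥ 1 and N ≥ 1 be integers, σh², σw² > 0, and let P_{D,k}, P_{F,k} ∈ (0,1) satisfy P_{D,k} > P_{F,k} for every k ∈ {1,…,K}. Let P₁ and P₀ be the Poisson-Binomial pmfs P₁(ℓ) = Σ_{S ⊆ {1,…,K}, |S| = ℓ} Π_{k∈S} P_{D,k} · Π_{k∉S} (1 − P_{D,k}) and P₀(ℓ) = Σ_{S ⊆ {1,…,K}, |S| = ℓ} Π_{k∈S} P_{F,k} · Π_{k∉S} (1 − P_{F,k}). Then the function Λ(ψ) = ln[ (Σ_{ℓ=0}^K g(ψ,ℓ)P₁(ℓ)) / (Σ_{ℓ=0}^K g(ψ,ℓ)P₀(ℓ)) ], where g(ψ,ℓ) = (σw² + ℓσh²)^(−N)·exp(−ψ/(σw² + ℓσh²)), is strictly increasing in ψ on ℝ. -/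
open Finset

/-- Poisson–binomial pmf, defined recursively, with `ℤ` index (0 off `[0,n]`). -/
noncomputable def QbAux (p : ℕ → ℝ) : ℕ → ℤ → ℝ
  | 0, ℓ => if ℓ = 0 then 1 else 0
  | n + 1, ℓ => p n * QbAux p n (ℓ - 1) + (1 - p n) * QbAux p n ℓ

lemma QbAux_neg (p : ℕ → ℝ) : ∀ n, ∀ ℓ : ℤ, ℓ < 0 → QbAux p n ℓ = 0 := by
  intro n
  induction n with
  | zero => intro ℓ hℓ; simp [QbAux]; omega
  | succ n ih =>
      intro ℓ hℓ
      simp [QbAux, ih (ℓ - 1) (by omega), ih ℓ hℓ]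

lemma QbAux_eq (p : ℕ → ℝ) : ∀ n, ∀ ℓ : ℕ,
    QbAux p n (ℓ : ℤ) = ∑ S ∈ (Finset.range n).powersetCard ℓ,
      (∏ k ∈ S, p k) * ∏ k ∈ Finset.range n \ S, (1 - p k) := by
  intro n
  induction n with
  | zero =>
      intro ℓ
      cases ℓ with
      | zero => simp [QbAux]
      | succ m =>
          rw [show powersetCard (m+1) (Finset.range 0) = ∅ from by simp]
          simp only [QbAux]
          rw [if_neg (by omega), Finset.sum_empty]
  | succ n ih =>
      intro ℓ
      have hnotmem : n ∉ Finset.range n := by simp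
      cases ℓ with
      | zero =>
          have h0 : QbAux p n (-1) = 0 := QbAux_neg p n _ (by omega)
          have e1 : ((0:ℕ):ℤ) - 1 = -1 := by norm_num
          simp only [QbAux, Nat.cast_zero, zero_sub, h0, mul_zero, zero_add]
          rw [show ((0:ℤ)) = ((0:ℕ):ℤ) from rfl, ih 0]
          simp only [powersetCard_zero, sum_singleton, prod_empty, sdiff_empty, one_mul]
          rw [Finset.prod_range_succ]
          ring
      | succ m =>
          have hrec : QbAux p (n+1) ((m+1 : ℕ) : ℤ)
              = p n * QbAux p n ((m : ℕ) : ℤ) + (1 - p n) * QbAux p n ((m+1 : ℕ) : ℤ) := by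
            simp only [QbAux]
            norm_num
          rw [hrec, ih m, ih (m+1)]
          rw [Finset.range_add_one, powersetCard_succ_insert hnotmem]
          rw [Finset.sum_union]
          · have himg : ∑ S ∈ ((Finset.range n).powersetCard m).image (insert n),
                (∏ k ∈ S, p k) * ∏ k ∈ insert n (Finset.range n) \ S, (1 - p k)
                = ∑ S ∈ (Finset.range n).powersetCard m,
                    p n * ((∏ k ∈ S, p k) * ∏ k ∈ Finset.range n \ S, (1 - p k)) := by
              rw [Finset.sum_image]
              · apply Finset.sum_congr rfl
                intro S hS
                have hSsub : S ⊆ Finset.range n := (Finset.mem_powersetCard.mp hS).1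
                have hnS : n ∉ S := fun h => hnotmem (hSsub h)
                have hsd : insert n (Finset.range n) \ insert n S = Finset.range n \ S := by
                  rw [Finset.insert_sdiff_insert, Finset.sdiff_insert_of_notMem hnotmem]
                rw [hsd, Finset.prod_insert hnS]
                ring
              · intro S hS T hT hST
                have hnS : n ∉ S := fun h => hnotmem ((Finset.mem_powersetCard.mp hS).1 h)
                have hnT : n ∉ T := fun h => hnotmem ((Finset.mem_powersetCard.mp hT).1 h)
                have := congrArg (fun s => Finset.erase s n) hST
                simpa [Finset.erase_insert hnS, Finset.erase_insert hnT] using this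
            have hold : ∑ S ∈ (Finset.range n).powersetCard (m + 1),
                (∏ k ∈ S, p k) * ∏ k ∈ insert n (Finset.range n) \ S, (1 - p k)
                = ∑ S ∈ (Finset.range n).powersetCard (m + 1),
                    (1 - p n) * ((∏ k ∈ S, p k) * ∏ k ∈ Finset.range n \ S, (1 - p k)) := by
              apply Finset.sum_congr rfl
              intro S hS
              have hSsub : S ⊆ Finset.range n := (Finset.mem_powersetCard.mp hS).1
              have hnS : n ∉ S := fun h => hnotmem (hSsub h)
              have hsd : insert n (Finset.range n) \ S = insert n (Finset.range n \ S) :=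
                Finset.insert_sdiff_of_notMem _ hnS
              have hnS' : n ∉ Finset.range n \ S := by simp
              rw [hsd, Finset.prod_insert hnS']
              ring
            rw [himg, hold, ← Finset.mul_sum, ← Finset.mul_sum]
            ring
          · rw [Finset.disjoint_left]
            intro S hS hS'
            obtain ⟨T, hT, rfl⟩ := Finset.mem_image.mp hS'
            have : insert n T ⊆ Finset.range n := (Finset.mem_powersetCard.mp hS).1
            exact hnotmem (this (Finset.mem_insert_self n T))

lemma QbAux_nonneg (p : ℕ → ℝ) : ∀ n, (∀ k < n, 0 ≤ p k ∧ p k ≤ 1) → ∀ ℓ : ℤ, 0 ≤ QbAux p n ℓ := by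
  intro n
  induction n with
  | zero => intro _ ℓ; simp only [QbAux]; split <;> norm_num
  | succ n ih =>
      intro hp ℓ
      have h1 := ih (fun k hk => hp k (by omega))
      have h2 := hp n (by omega)
      simp only [QbAux]
      have := h1 (ℓ - 1); have := h1 ℓ
      nlinarith [h2.1, h2.2]

lemma QbAux_pos (p : ℕ → ℝ) : ∀ n, (∀ k < n, 0 < p k ∧ p k < 1) → ∀ ℓ : ℤ, 0 ≤ ℓ → ℓ ≤ n → 0 < QbAux p n ℓ := by
  intro n
  induction n with
  | zero =>
      intro _ ℓ h0 h1
      have : ℓ = 0 := by omega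
      simp [QbAux, this]
  | succ n ih =>
      intro hp ℓ h0 h1
      have hp' : ∀ k < n, 0 < p k ∧ p k < 1 := fun k hk => hp k (by omega)
      have hnn := QbAux_nonneg p n (fun k hk => ⟨(hp' k hk).1.le, (hp' k hk).2.le⟩)
      have hn := hp n (by omega)
      simp only [QbAux]
      rcases le_or_gt ℓ n with h | h
      · have hpos : 0 < QbAux p n ℓ := ih hp' ℓ h0 h
        nlinarith [hnn (ℓ - 1)]
      · have hℓ : ℓ = n + 1 := by omega
        have hpos : 0 < QbAux p n (ℓ - 1) := ih hp' (ℓ - 1) (by omega) (by omega)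
        nlinarith [hnn ℓ]

/-- Joint MLR (TP2) + cross log-concavity statement for Poisson-binomial pmfs. -/
lemma QbAux_tp2 (p q : ℕ → ℝ) : ∀ n, (∀ k < n, 0 ≤ q k) → (∀ k < n, q k ≤ p k) → (∀ k < n, p k ≤ 1) →
    (∀ m ℓ : ℤ, m ≤ ℓ → QbAux p n m * QbAux q n ℓ ≤ QbAux p n ℓ * QbAux q n m) ∧
    (∀ i j : ℤ, i ≤ j → QbAux p n i * QbAux q n (j+1) ≤ QbAux p n (i+1) * QbAux q n j) := by
  intro n
  induction n with
  | zero =>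
      intro _ _ _
      constructor
      · intro m ℓ h
        simp only [QbAux]
        split_ifs <;> norm_num <;> omega
      · intro i j h
        simp only [QbAux]
        split_ifs <;> norm_num <;> omega
  | succ n ih =>
      intro hq0 hqp hp1
      obtain ⟨IH1, IH2⟩ := ih (fun k hk => hq0 k (by omega)) (fun k hk => hqp k (by omega))
          (fun k hk => hp1 k (by omega))
      set f : ℤ → ℝ := QbAux p n with hf
      set g : ℤ → ℝ := QbAux q n with hgdef
      have hb0 : 0 ≤ q n := hq0 n (by omega)
      have hba : q n ≤ p n := hqp n (by omega)
      have ha1 : p n ≤ 1 := hp1 n (by omega)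
      set a : ℝ := p n
      set b : ℝ := q n
      constructor
      · intro m ℓ hml
        rcases eq_or_lt_of_le hml with rfl | hlt
        · exact le_rfl
        simp only [QbAux]
        have E1 := IH1 (m-1) (ℓ-1) (by omega)
        have E2 := IH1 m ℓ hml
        have E3 := IH1 m (ℓ-1) (by omega)
        have E4 := IH1 (m-1) ℓ (by omega)
        have E5 := IH2 (m-1) (ℓ-1) (by omega)
        have e5 : f (m-1) * g (ℓ-1+1) ≤ f (m-1+1) * g (ℓ-1) := E5
        have e5' : f (m-1) * g ℓ ≤ f m * g (ℓ-1) := by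
          have h1 : ℓ - 1 + 1 = ℓ := by ring
          have h2 : m - 1 + 1 = m := by ring
          rwa [h1, h2] at e5
        nlinarith [mul_nonneg (mul_nonneg (hb0.trans hba) hb0) (sub_nonneg.mpr E1),
          mul_nonneg (mul_nonneg (by linarith : (0:ℝ) ≤ 1 - a) (by linarith : (0:ℝ) ≤ 1 - b))
            (sub_nonneg.mpr E2),
          mul_nonneg (mul_nonneg (hb0.trans hba) (by linarith : (0:ℝ) ≤ 1 - b))
            (sub_nonneg.mpr E3),
          mul_nonneg (mul_nonneg (by linarith : (0:ℝ) ≤ 1 - a) hb0) (sub_nonneg.mpr E4),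
          mul_nonneg (by linarith : (0:ℝ) ≤ a - b) (sub_nonneg.mpr e5')]
      · intro i j hij
        simp only [QbAux]
        rw [show (j:ℤ) + 1 - 1 = j from by ring, show (i:ℤ) + 1 - 1 = i from by ring]
        have T1 : f (i-1) * g j ≤ f i * g (j-1) := by
          have := IH2 (i-1) (j-1) (by omega)
          have h1 : j - 1 + 1 = j := by ring
          have h2 : i - 1 + 1 = i := by ring
          rwa [h1, h2] at this
        have T2 := IH2 i j hij
        have AC : f (i-1) * g (j+1) ≤ f i * g j := by
          have := IH2 (i-1) j (by omega)
          have h2 : i - 1 + 1 = i := by ring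
          rwa [h2] at this
        have BC : f (i-1) * g (j+1) ≤ f (i+1) * g (j-1) := by
          rcases eq_or_lt_of_le hij with rfl | hlt
          · have := IH1 (i-1) (i+1) (by omega)
            exact this
          · have h1 : f i * g j ≤ f (i+1) * g (j-1) := by
              have := IH2 i (j-1) (by omega)
              have h3 : j - 1 + 1 = j := by ring
              rwa [h3] at this
            linarith
        nlinarith [mul_nonneg (mul_nonneg (hb0.trans hba) hb0) (sub_nonneg.mpr T1),
          mul_nonneg (mul_nonneg (by linarith : (0:ℝ) ≤ 1 - a) (by linarith : (0:ℝ) ≤ 1 - b))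
            (sub_nonneg.mpr T2),
          mul_nonneg (by linarith : (0:ℝ) ≤ a - b) (sub_nonneg.mpr AC),
          mul_nonneg (mul_nonneg (by linarith : (0:ℝ) ≤ 1 - a) hb0) (sub_nonneg.mpr BC)]

/-- Proposition 1 + Theorem 2: with conditionally independent non-identical
sensors satisfying `P_{D,k} > P_{F,k}` and the resulting Poisson-Binomial pmfs,
the LLR `Λ(ψ)` of the received energy over an `N`-diversity Rayleigh MAC is
strictly increasing, hence the received-energy test is optimal. -/
theorem stmt_5 (K N : ℕ) (hK : 1 ≤ K) (hN : 1 ≤ N)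
    (σh2 σw2 : ℝ) (hσh : 0 < σh2) (hσw : 0 < σw2)
    (PD PF : ℕ → ℝ)
    (hPF : ∀ k < K, 0 < PF k) (hPD : ∀ k < K, PD k < 1)
    (hDF : ∀ k < K, PF k < PD k)
    (P1 P0 : ℕ → ℝ)
    (hP1 : ∀ ℓ, P1 ℓ = ∑ S ∈ (Finset.range K).powersetCard ℓ,
        (∏ k ∈ S, PD k) * ∏ k ∈ Finset.range K \ S, (1 - PD k))
    (hP0 : ∀ ℓ, P0 ℓ = ∑ S ∈ (Finset.range K).powersetCard ℓ,
        (∏ k ∈ S, PF k) * ∏ k ∈ Finset.range K \ S, (1 - PF k))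
    (g : ℝ → ℕ → ℝ)
    (hg : ∀ ψ ℓ, g ψ ℓ = ((σw2 + ℓ * σh2) ^ N)⁻¹ * Real.exp (-ψ / (σw2 + ℓ * σh2)))
    (Λ : ℝ → ℝ)
    (hΛ : ∀ ψ, Λ ψ = Real.log ((∑ ℓ ∈ Finset.range (K + 1), g ψ ℓ * P1 ℓ) /
                                 (∑ ℓ ∈ Finset.range (K + 1), g ψ ℓ * P0 ℓ))) :
    StrictMono Λ := by
  intro ψ1 ψ2 hψ
  rw [hΛ ψ1, hΛ ψ2]
  have hDpos : ∀ ℓ : ℕ, 0 < σw2 + ℓ * σh2 := fun ℓ => by positivity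
  have hgpos : ∀ ψ : ℝ, ∀ ℓ : ℕ, 0 < g ψ ℓ := fun ψ ℓ => by
    rw [hg]
    have := hDpos ℓ
    positivity
  -- pmf facts
  have hPD' : ∀ k < K, 0 < PD k ∧ PD k < 1 :=
    fun k hk => ⟨(hPF k hk).trans (hDF k hk), hPD k hk⟩
  have hPF' : ∀ k < K, 0 < PF k ∧ PF k < 1 :=
    fun k hk => ⟨hPF k hk, (hDF k hk).trans (hPD k hk)⟩
  have hP1Q : ∀ ℓ : ℕ, P1 ℓ = QbAux PD K (ℓ : ℤ) := fun ℓ => by rw [hP1 ℓ, QbAux_eq]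
  have hP0Q : ∀ ℓ : ℕ, P0 ℓ = QbAux PF K (ℓ : ℤ) := fun ℓ => by rw [hP0 ℓ, QbAux_eq]
  have hP1pos : ∀ ℓ : ℕ, ℓ ≤ K → 0 < P1 ℓ := fun ℓ hℓ => by
    rw [hP1Q]; exact QbAux_pos PD K hPD' ℓ (by omega) (by exact_mod_cast hℓ)
  have hP0pos : ∀ ℓ : ℕ, ℓ ≤ K → 0 < P0 ℓ := fun ℓ hℓ => by
    rw [hP0Q]; exact QbAux_pos PF K hPF' ℓ (by omega) (by exact_mod_cast hℓ)
  have hMLR : ∀ m ℓ : ℕ, m ≤ ℓ → P1 m * P0 ℓ ≤ P1 ℓ * P0 m := by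
    intro m ℓ h
    rw [hP1Q, hP1Q, hP0Q, hP0Q]
    exact (QbAux_tp2 PD PF K (fun k hk => (hPF' k hk).1.le)
      (fun k hk => (hDF k hk).le) (fun k hk => (hPD k hk).le)).1 m ℓ (by exact_mod_cast h)
  -- cross inequality for g
  have hgE : ∀ m ℓ : ℕ, m < ℓ → g ψ1 ℓ * g ψ2 m < g ψ2 ℓ * g ψ1 m := by
    intro m ℓ hmℓ
    rw [hg, hg, hg, hg]
    have hA := hDpos m
    have hB := hDpos ℓ
    have hAB : σw2 + m * σh2 < σw2 + ℓ * σh2 := by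
      have : (m : ℝ) < ℓ := by exact_mod_cast hmℓ
      nlinarith
    have key : -ψ1 / (σw2 + ℓ * σh2) + -ψ2 / (σw2 + m * σh2)
        < -ψ2 / (σw2 + ℓ * σh2) + -ψ1 / (σw2 + m * σh2) := by
      have h1 := div_lt_div_of_pos_left (sub_pos.mpr hψ) hA hAB
      rw [sub_div, sub_div] at h1
      rw [neg_div, neg_div, neg_div, neg_div]
      linarith
    have c1 : (0:ℝ) < ((σw2 + ℓ * σh2) ^ N)⁻¹ * ((σw2 + m * σh2) ^ N)⁻¹ := by positivity
    calc ((σw2 + ℓ * σh2) ^ N)⁻¹ * Real.exp (-ψ1 / (σw2 + ℓ * σh2)) *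
          (((σw2 + m * σh2) ^ N)⁻¹ * Real.exp (-ψ2 / (σw2 + m * σh2)))
        = ((σw2 + ℓ * σh2) ^ N)⁻¹ * ((σw2 + m * σh2) ^ N)⁻¹ *
            Real.exp (-ψ1 / (σw2 + ℓ * σh2) + -ψ2 / (σw2 + m * σh2)) := by
          rw [Real.exp_add]; ring
      _ < ((σw2 + ℓ * σh2) ^ N)⁻¹ * ((σw2 + m * σh2) ^ N)⁻¹ *
            Real.exp (-ψ2 / (σw2 + ℓ * σh2) + -ψ1 / (σw2 + m * σh2)) := by
          exact mul_lt_mul_of_pos_left (Real.exp_lt_exp.mpr key) c1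
      _ = ((σw2 + ℓ * σh2) ^ N)⁻¹ * Real.exp (-ψ2 / (σw2 + ℓ * σh2)) *
            (((σw2 + m * σh2) ^ N)⁻¹ * Real.exp (-ψ1 / (σw2 + m * σh2))) := by
          rw [Real.exp_add]; ring
  -- the four sums
  set R : Finset ℕ := Finset.range (K + 1) with hR
  have hRne : R.Nonempty := ⟨0, by simp [hR]⟩
  have hmemle : ∀ ℓ ∈ R, ℓ ≤ K := fun ℓ hℓ => by
    simp only [hR, Finset.mem_range] at hℓ; omega
  have hKR : K ∈ R := by simp [hR]
  have h0R : 0 ∈ R := by simp [hR]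
  have hTpos : ∀ ψ : ℝ, (0 < ∑ ℓ ∈ R, g ψ ℓ * P1 ℓ) ∧ (0 < ∑ ℓ ∈ R, g ψ ℓ * P0 ℓ) := by
    intro ψ
    constructor <;> exact Finset.sum_pos
      (fun ℓ hℓ => mul_pos (hgpos ψ ℓ) (by first
        | exact hP1pos ℓ (hmemle ℓ hℓ) | exact hP0pos ℓ (hmemle ℓ hℓ))) hRne
  apply Real.log_lt_log (div_pos (hTpos ψ1).1 (hTpos ψ1).2)
  rw [div_lt_div_iff₀ (hTpos ψ1).2 (hTpos ψ2).2]
  -- double-sum expansion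
  set c : ℕ → ℕ → ℝ := fun ℓ m =>
    g ψ2 ℓ * P1 ℓ * (g ψ1 m * P0 m) - g ψ1 ℓ * P1 ℓ * (g ψ2 m * P0 m) with hc
  have e3 : (∑ ℓ ∈ R, g ψ2 ℓ * P1 ℓ) * (∑ ℓ ∈ R, g ψ1 ℓ * P0 ℓ)
      - (∑ ℓ ∈ R, g ψ1 ℓ * P1 ℓ) * (∑ ℓ ∈ R, g ψ2 ℓ * P0 ℓ)
      = ∑ ℓ ∈ R, ∑ m ∈ R, c ℓ m := by
    rw [Finset.sum_mul_sum, Finset.sum_mul_sum, ← Finset.sum_sub_distrib]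
    exact Finset.sum_congr rfl fun ℓ _ => by rw [← Finset.sum_sub_distrib]
  have hswap : ∑ ℓ ∈ R, ∑ m ∈ R, c ℓ m = ∑ ℓ ∈ R, ∑ m ∈ R, c m ℓ := Finset.sum_comm
  have hkey : ∀ ℓ m : ℕ, ℓ ≤ K → m ≤ K →
      c ℓ m + c m ℓ = (P1 ℓ * P0 m - P1 m * P0 ℓ) * (g ψ2 ℓ * g ψ1 m - g ψ1 ℓ * g ψ2 m) := by
    intro ℓ m _ _; simp only [hc]; ring
  have hterm : ∀ ℓ ∈ R, ∀ m ∈ R, 0 ≤ c ℓ m + c m ℓ := by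
    intro ℓ hℓ m hm
    rw [hkey ℓ m (hmemle ℓ hℓ) (hmemle m hm)]
    rcases lt_trichotomy ℓ m with h | h | h
    · have x1 : P1 ℓ * P0 m - P1 m * P0 ℓ ≤ 0 := sub_nonpos.mpr (hMLR ℓ m h.le)
      have x2 : g ψ1 m * g ψ2 ℓ ≤ g ψ2 m * g ψ1 ℓ := (hgE ℓ m h).le
      nlinarith
    · subst h; simp
    · exact mul_nonneg (sub_nonneg.mpr (hMLR m ℓ h.le)) (sub_nonneg.mpr (hgE m ℓ h).le)
  -- strict term at (K, 0)
  have hP1K : P1 K = ∏ k ∈ Finset.range K, PD k := by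
    rw [hP1 K, show (Finset.range K).powersetCard K = {Finset.range K} from by
      simpa using Finset.powersetCard_self (Finset.range K)]
    simp
  have hP0K : P0 K = ∏ k ∈ Finset.range K, PF k := by
    rw [hP0 K, show (Finset.range K).powersetCard K = {Finset.range K} from by
      simpa using Finset.powersetCard_self (Finset.range K)]
    simp
  have hP10 : P1 0 = ∏ k ∈ Finset.range K, (1 - PD k) := by
    rw [hP1 0, Finset.powersetCard_zero]; simp
  have hP00 : P0 0 = ∏ k ∈ Finset.range K, (1 - PF k) := by
    rw [hP0 0, Finset.powersetCard_zero]; simp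
  have hstrict : P1 0 * P0 K < P1 K * P0 0 := by
    rw [hP1K, hP0K, hP10, hP00, ← Finset.prod_mul_distrib, ← Finset.prod_mul_distrib]
    refine Finset.prod_lt_prod_of_nonempty ?_ ?_ ⟨0, Finset.mem_range.mpr (by omega)⟩
    · intro k hk
      have hk' := Finset.mem_range.mp hk
      exact mul_pos (by linarith [(hPD' k hk').2]) (hPF k hk')
    · intro k hk
      have hk' := Finset.mem_range.mp hk
      have h1 := (hPD' k hk').1
      have h2 := (hPD' k hk').2
      have h3 := (hPF' k hk').1
      have h4 := (hPF' k hk').2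
      have h5 := hDF k hk'
      nlinarith
  have hposK0 : 0 < c K 0 + c 0 K := by
    rw [hkey K 0 le_rfl (by omega)]
    exact mul_pos (sub_pos.mpr hstrict) (sub_pos.mpr (hgE 0 K (by omega)))
  have hdpos : 0 < ∑ ℓ ∈ R, ∑ m ∈ R, (c ℓ m + c m ℓ) := by
    refine Finset.sum_pos' (fun ℓ hℓ => Finset.sum_nonneg fun m hm => hterm ℓ hℓ m hm)
      ⟨K, hKR, Finset.sum_pos' (fun m hm => hterm K hKR m hm) ⟨0, h0R, hposK0⟩⟩
  have hsplit : ∑ ℓ ∈ R, ∑ m ∈ R, (c ℓ m + c m ℓ)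
      = (∑ ℓ ∈ R, ∑ m ∈ R, c ℓ m) + ∑ ℓ ∈ R, ∑ m ∈ R, c m ℓ := by
    rw [← Finset.sum_add_distrib]
    exact Finset.sum_congr rfl fun ℓ _ => by rw [← Finset.sum_add_distrib]
  have : 0 < ∑ ℓ ∈ R, ∑ m ∈ R, c ℓ m := by
    rw [hsplit, ← hswap] at hdpos; linarith
  linarith [e3, this]
end

section
/- Let p ∈ (0,1] and let a, c ∈ ℝ. Then lim_{K→∞} Σ_{ℓ=0}^{K} C(K,ℓ)·p^ℓ·(1−p)^(K−ℓ)·exp(−(a·ℓ + c)/K) = exp(−a·p). -/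
/-!
Since `exp (-(a ℓ + c) / K) = exp (-c / K) * (exp (-a / K)) ^ ℓ`, the binomial theorem turns the
sum into `exp (-c / K) * (1 + g K) ^ K` with `g K = p * (exp (-a / K) - 1)`. As `K * g K → -a p`
(the derivative of `x ↦ p * exp (-a x)` at `0`), `(1 + g K) ^ K → exp (-a p)`, while
`exp (-c / K) → 1`.
-/

open Filter Topology

theorem sum_choose_mul_pow_mul_one_sub_pow_mul_pow {R : Type*} [CommRing R] (K : ℕ) (p x : R) :
    ∑ ℓ ∈ Finset.range (K + 1), (K.choose ℓ : R) * p ^ ℓ * (1 - p) ^ (K - ℓ) * x ^ ℓ =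
      (1 + (p * x - p)) ^ K := by
  rw [show 1 + (p * x - p) = p * x + (1 - p) by ring, add_pow]
  refine Finset.sum_congr rfl fun ℓ _ => ?_
  ring

theorem tendsto_nat_mul_sub_of_hasDerivAt {f : ℝ → ℝ} {f' : ℝ} (hf : HasDerivAt f f' 0) :
    Tendsto (fun n : ℕ => n * (f (n : ℝ)⁻¹ - f 0)) atTop (𝓝 f') := by
  have hinv : Tendsto (fun n : ℕ => (n : ℝ)⁻¹) atTop (𝓝[≠] 0) :=
    tendsto_nhdsWithin_of_tendsto_nhds_of_eventually_within _ tendsto_inv_atTop_nhds_zero_nat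
      ((eventually_ne_atTop 0).mono fun n hn => by simpa using hn)
  refine ((hasDerivAt_iff_tendsto_slope_zero.mp hf).comp hinv).congr fun n => ?_
  simp

theorem Real.exp_neg_mul_add_div (a c K : ℝ) (ℓ : ℕ) :
    Real.exp (-(a * ℓ + c) / K) = Real.exp (-c / K) * Real.exp (-a / K) ^ ℓ := by
  rw [← Real.exp_nat_mul, ← Real.exp_add]
  ring_nf

theorem stmt_7_general (p : ℝ) (a c : ℝ) :
    Tendsto (fun K : ℕ => ∑ ℓ ∈ Finset.range (K + 1),
        (K.choose ℓ : ℝ) * p ^ ℓ * (1 - p) ^ (K - ℓ) *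
          Real.exp (-(a * ℓ + c) / K))
      atTop (nhds (Real.exp (-(a * p)))) := by
  have hderiv : HasDerivAt (fun x => p * Real.exp (-a * x)) (-(a * p)) 0 := by
    simpa [mul_comm] using (((hasDerivAt_id (0 : ℝ)).const_mul (-a)).exp).const_mul p
  have hpow : Tendsto (fun K : ℕ => (1 + (p * Real.exp (-a / K) - p)) ^ K) atTop
      (𝓝 (Real.exp (-(a * p)))) := by
    refine Real.tendsto_one_add_pow_exp_of_tendsto ((tendsto_nat_mul_sub_of_hasDerivAt hderiv).congr
      fun K => ?_)
    simp [div_eq_mul_inv]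
  have hconst : Tendsto (fun K : ℕ => Real.exp (-c / K)) atTop (𝓝 1) := by
    simpa [Function.comp_def] using
      (Real.continuous_exp.tendsto 0).comp (tendsto_const_div_atTop_nhds_zero_nat (-c))
  refine (one_mul (Real.exp (-(a * p))) ▸ hconst.mul hpow).congr fun K => ?_
  simp_rw [Real.exp_neg_mul_add_div, ← sum_choose_mul_pow_mul_one_sub_pow_mul_pow, Finset.mul_sum]
  exact Finset.sum_congr rfl fun ℓ _ => by ring

/-- Key limit of Theorem 4: the binomial expectation of `exp(−(aℓ+c)/K)`
converges to `exp(−ap)` as `K → ∞`. -/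
theorem stmt_7 (p : ℝ) (hp : p ∈ Set.Ioc (0 : ℝ) 1) (a c : ℝ) :
    Tendsto (fun K : ℕ => ∑ ℓ ∈ Finset.range (K + 1),
        (K.choose ℓ : ℝ) * p ^ ℓ * (1 - p) ^ (K - ℓ) *
          Real.exp (-(a * ℓ + c) / K))
      atTop (nhds (Real.exp (-(a * p)))) :=
  stmt_7_general p a c
end

section
/- Fix an integer N ≥ 1, reals σh², σw² > 0, and P_F ∈ (0,1). For each integer K ≥ 1 define the probability measure μ_K^{(0)} on ℝ^{2N} as the Gaussian mixture μ_K^{(0)} = Σ_{ℓ=0}^{K} C(K,ℓ)·P_F^ℓ·(1−P_F)^{K−ℓ} · Π_{i=1}^{2N} 𝒩(0, v_ℓ), where v_ℓ = (ℓ·σh²/N + σw²)/(2·P_F·K·σh²), and similarly μ_K^{(1)} with the mixing weights C(K,ℓ)·P_D^ℓ·(1−P_D)^{K−ℓ} for some P_D ∈ (0,1) and the same variances v_ℓ. Then, as K → ∞, μ_K^{(0)} converges weakly (in distribution) to the product measure Π_{i=1}^{2N} 𝒩(0, 1/(2N)), and μ_K^{(1)} converges weakly to Π_{i=1}^{2N}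 𝒩(0, P_D/(2·P_F·N)). -/
/-!
Write `G t` for the integral of `f` against the centred product Gaussian with variance `t` in
every coordinate. The mixture integral is `∑ ℓ, C(K, ℓ) p^ℓ (1 - p)^(K - ℓ) G (v K ℓ)` with
`v K ℓ = c (ℓ / K) + b / K`, i.e. the `K`-th Bernstein polynomial of `x ↦ G (c x + b / K)`
evaluated at `p`. Scaling a standard Gaussian and dominated convergence make `G` continuous, so
these functions converge uniformly on `[0, 1]` to `x ↦ G (c x)`; since Bernstein approximation is
a contraction of `C([0, 1], ℝ)` converging to the identity, the sums tend to `G (c p)`.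
-/

open MeasureTheory ProbabilityTheory Filter Finset Topology unitInterval
open scoped BoundedContinuousFunction

theorem bernsteinApproximation_sub (n : ℕ) (f g : C(I, ℝ)) :
    bernsteinApproximation n (f - g) = bernsteinApproximation n f - bernsteinApproximation n g := by
  ext x
  simp [bernsteinApproximation.apply, mul_sub, sum_sub_distrib]

theorem norm_bernsteinApproximation_le (n : ℕ) (f : C(I, ℝ)) :
    ‖bernsteinApproximation n f‖ ≤ ‖f‖ := by
  refine (ContinuousMap.norm_le _ (norm_nonneg f)).mpr fun x => ?_
  calc ‖bernsteinApproximation n f x‖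
      ≤ ∑ k : Fin (n + 1), bernstein n k x * ‖f (bernstein.z k)‖ := by
        rw [bernsteinApproximation.apply]
        refine (norm_sum_le _ _).trans (le_of_eq (sum_congr rfl fun k _ => ?_))
        rw [norm_smul, Real.norm_of_nonneg bernstein_nonneg]
    _ ≤ ∑ k : Fin (n + 1), bernstein n k x * ‖f‖ :=
        sum_le_sum fun k _ => mul_le_mul_of_nonneg_left (f.norm_coe_le_norm _) bernstein_nonneg
    _ = ‖f‖ := by rw [← sum_mul, bernstein.probability, one_mul]

theorem tendsto_bernsteinApproximation_of_tendsto {f : ℕ → C(I, ℝ)} {g : C(I, ℝ)}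
    (hf : Tendsto f atTop (𝓝 g)) :
    Tendsto (fun n => bernsteinApproximation n (f n)) atTop (𝓝 g) := by
  rw [tendsto_iff_norm_sub_tendsto_zero] at hf ⊢
  have hg := tendsto_iff_norm_sub_tendsto_zero.mp (bernsteinApproximation_uniform g)
  have hsum : Tendsto (fun n => ‖f n - g‖ + ‖bernsteinApproximation n g - g‖) atTop (𝓝 0) := by
    simpa only [add_zero] using hf.add hg
  refine squeeze_zero (fun _ => norm_nonneg _) (fun n => ?_) hsum
  calc ‖bernsteinApproximation n (f n) - g‖
      = ‖bernsteinApproximation n (f n - g) + (bernsteinApproximation n g - g)‖ := by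
        rw [bernsteinApproximation_sub, sub_add_sub_cancel]
    _ ≤ ‖f n - g‖ + ‖bernsteinApproximation n g - g‖ :=
        (norm_add_le _ _).trans (by gcongr; exact norm_bernsteinApproximation_le _ _)

theorem tendsto_sum_bernstein_comp_mul_add {G : ℝ → ℝ} (hG : Continuous G) (c : ℝ) {s : ℕ → ℝ}
    (hs : Tendsto s atTop (𝓝 0)) (x : I) :
    Tendsto (fun n : ℕ => ∑ k ∈ range (n + 1),
      (n.choose k : ℝ) * x ^ k * (1 - x) ^ (n - k) * G (c * (k / n) + s n)) atTop
      (𝓝 (G (c * x))) := by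
  -- uniform convergence of `x ↦ G (c * x + s n)` on `I` is continuity of the curried map
  let F : C(ℝ, C(I, ℝ)) := ContinuousMap.curry ⟨fun q : ℝ × I => G (c * q.2 + q.1), by fun_prop⟩
  have hF := (continuous_eval_const x).tendsto _ |>.comp
    (tendsto_bernsteinApproximation_of_tendsto ((F.continuous.tendsto 0).comp hs))
  convert hF using 1
  · ext n
    simp [F, bernsteinApproximation.apply, sum_range, bernstein_apply, bernstein.z, mul_comm]
  · simp [F]

section Gaussian

variable {ι : Type*} [Fintype ι]

theorem gaussianReal_toNNReal_eq_map (t : ℝ) :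
    gaussianReal 0 t.toNNReal = (gaussianReal 0 1).map (√t * ·) := by
  rw [gaussianReal_map_const_mul, mul_zero, mul_one]
  congr
  ext
  rcases le_or_gt 0 t with ht | ht
  · simp [Real.sq_sqrt ht, Real.toNNReal_of_nonneg ht]
  · simp [Real.toNNReal_of_nonpos ht.le, Real.sqrt_eq_zero'.mpr ht.le]

theorem integral_pi_gaussianReal_toNNReal {E : Type*} [NormedAddCommGroup E] [NormedSpace ℝ E]
    {f : (ι → ℝ) → E} (hf : Continuous f) (t : ℝ) :
    ∫ x, f x ∂(Measure.pi fun _ : ι => gaussianReal 0 t.toNNReal)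
      = ∫ x, f (fun i => √t * x i) ∂(Measure.pi fun _ : ι => gaussianReal 0 1) := by
  have hmeas : Measurable fun (x : ι → ℝ) i => √t * x i := by fun_prop
  simp_rw [gaussianReal_toNNReal_eq_map t]
  rw [← Measure.pi_map_pi fun _ => (measurable_const_mul _).aemeasurable,
    integral_map hmeas.aemeasurable hf.aestronglyMeasurable]

theorem continuous_integral_pi_gaussianReal (f : (ι → ℝ) →ᵇ ℝ) :
    Continuous fun t : ℝ => ∫ x, f x ∂(Measure.pi fun _ : ι => gaussianReal 0 t.toNNReal) := by
  simp_rw [integral_pi_gaussianReal_toNNReal f.continuous]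
  refine continuous_of_dominated (fun t => ?_) (fun t => ?_) (integrable_const ‖f‖) ?_
  · exact (f.continuous.comp (by fun_prop)).aestronglyMeasurable
  · exact .of_forall fun x => f.norm_coe_le_norm _
  · exact .of_forall fun x => f.continuous.comp (by fun_prop)

end Gaussian

theorem integral_finset_sum_ofReal_smul_measure {α ι E : Type*} [MeasurableSpace α]
    [NormedAddCommGroup E] [NormedSpace ℝ E] (s : Finset ι) {w : ι → ℝ} (hw : ∀ i ∈ s, 0 ≤ w i)
    (μ : ι → Measure α) {f : α → E} (hf : ∀ i ∈ s, Integrable f (μ i)) :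
    ∫ x, f x ∂(∑ i ∈ s, ENNReal.ofReal (w i) • μ i) = ∑ i ∈ s, w i • ∫ x, f x ∂μ i := by
  rw [integral_finsetSum_measure fun i hi => (hf i hi).smul_measure ENNReal.ofReal_ne_top]
  refine sum_congr rfl fun i hi => ?_
  rw [integral_smul_measure, ENNReal.toReal_ofReal (hw i hi)]

theorem tendsto_integral_binomial_mixture_pi_gaussianReal {ι : Type*} [Fintype ι]
    (f : (ι → ℝ) →ᵇ ℝ) {p : ℝ} (hp : p ∈ Set.Icc 0 1) (c : ℝ) {s : ℕ → ℝ}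
    (hs : Tendsto s atTop (𝓝 0)) :
    Tendsto (fun K : ℕ => ∫ x, f x ∂(∑ ℓ ∈ range (K + 1),
        ENNReal.ofReal ((K.choose ℓ : ℝ) * p ^ ℓ * (1 - p) ^ (K - ℓ)) •
          Measure.pi fun _ : ι => gaussianReal 0 (c * (ℓ / K) + s K).toNNReal)) atTop
      (𝓝 (∫ x, f x ∂(Measure.pi fun _ : ι => gaussianReal 0 (c * p).toNNReal))) := by
  have hweight : ∀ K ℓ, 0 ≤ (K.choose ℓ : ℝ) * p ^ ℓ * (1 - p) ^ (K - ℓ) := fun K ℓ =>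
    bernstein_apply K ℓ ⟨p, hp⟩ ▸ bernstein_nonneg
  simp_rw [integral_finset_sum_ofReal_smul_measure _ (fun ℓ _ => hweight _ ℓ) _
    (fun _ _ => f.integrable _), smul_eq_mul]
  exact tendsto_sum_bernstein_comp_mul_add (continuous_integral_pi_gaussianReal f) c hs ⟨p, hp⟩

theorem stmt_8_general (N : ℕ) (σh2 σw2 : ℝ) (hσh : 0 < σh2)
    (PF PD : ℝ) (hPF : PF ∈ Set.Ioo (0 : ℝ) 1) (hPD : PD ∈ Set.Ioo (0 : ℝ) 1)
    (v : ℕ → ℕ → ℝ)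
    (hv : ∀ K ℓ, v K ℓ = (ℓ * σh2 / N + σw2) / (2 * PF * K * σh2))
    (μ0 μ1 : ℕ → Measure (Fin (2 * N) → ℝ))
    (hμ0 : ∀ K, μ0 K = ∑ ℓ ∈ Finset.range (K + 1),
        (ENNReal.ofReal ((K.choose ℓ : ℝ) * PF ^ ℓ * (1 - PF) ^ (K - ℓ))) •
          Measure.pi (fun _ : Fin (2 * N) => gaussianReal 0 (v K ℓ).toNNReal))
    (hμ1 : ∀ K, μ1 K = ∑ ℓ ∈ Finset.range (K + 1),
        (ENNReal.ofReal ((K.choose ℓ : ℝ) * PD ^ ℓ * (1 - PD) ^ (K - ℓ))) •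
          Measure.pi (fun _ : Fin (2 * N) => gaussianReal 0 (v K ℓ).toNNReal)) :
    (∀ f : BoundedContinuousFunction (Fin (2 * N) → ℝ) ℝ,
        Tendsto (fun K : ℕ => ∫ x, f x ∂(μ0 K)) atTop
          (nhds (∫ x, f x ∂(Measure.pi (fun _ : Fin (2 * N) =>
            gaussianReal 0 (Real.toNNReal (1 / (2 * N)))))))) ∧
    (∀ f : BoundedContinuousFunction (Fin (2 * N) → ℝ) ℝ,
        Tendsto (fun K : ℕ => ∫ x, f x ∂(μ1 K)) atTop
          (nhds (∫ x, f x ∂(Measure.pi (fun _ : Fin (2 * N) =>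
            gaussianReal 0 (Real.toNNReal (PD / (2 * PF * N)))))))) := by
  have hPF0 : PF ≠ 0 := hPF.1.ne'
  have hv_affine : ∀ K ℓ, v K ℓ = 1 / (2 * PF * N) * (ℓ / K) + σw2 / (2 * PF * σh2) / K := by
    intro K ℓ
    rcases K.eq_zero_or_pos with rfl | hK
    · simp [hv]
    · rw [hv]
      field_simp
  have hs := tendsto_const_div_atTop_nhds_zero_nat (σw2 / (2 * PF * σh2))
  simp only [hμ0, hμ1, hv_affine]
  refine ⟨fun f => ?_, fun f => ?_⟩
  · rw [show (1 : ℝ) / (2 * N) = 1 / (2 * PF * N) * PF by field_simp]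
    exact tendsto_integral_binomial_mixture_pi_gaussianReal f (Set.Ioo_subset_Icc_self hPF) _ hs
  · rw [show PD / (2 * PF * N) = 1 / (2 * PF * N) * PD by ring]
    exact tendsto_integral_binomial_mixture_pi_gaussianReal f (Set.Ioo_subset_Icc_self hPD) _ hs

/-- Theorem 4 (IPC case): the Gaussian-mixture laws of the normalized received
vector converge weakly, as the number of sensors `K → ∞`, to the product
Gaussian laws `Π 𝒩(0, 1/(2N))` under `H₀` and `Π 𝒩(0, P_D/(2 P_F N))` under
`H₁`. Weak convergence is expressed via integrals of bounded continuous
functions. -/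
theorem stmt_8 (N : ℕ) (hN : 1 ≤ N) (σh2 σw2 : ℝ) (hσh : 0 < σh2) (hσw : 0 < σw2)
    (PF PD : ℝ) (hPF : PF ∈ Set.Ioo (0 : ℝ) 1) (hPD : PD ∈ Set.Ioo (0 : ℝ) 1)
    (v : ℕ → ℕ → ℝ)
    (hv : ∀ K ℓ, v K ℓ = (ℓ * σh2 / N + σw2) / (2 * PF * K * σh2))
    (μ0 μ1 : ℕ → Measure (Fin (2 * N) → ℝ))
    (hμ0 : ∀ K, μ0 K = ∑ ℓ ∈ Finset.range (K + 1),
        (ENNReal.ofReal ((K.choose ℓ : ℝ) * PF ^ ℓ * (1 - PF) ^ (K - ℓ))) •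
          Measure.pi (fun _ : Fin (2 * N) => gaussianReal 0 (v K ℓ).toNNReal))
    (hμ1 : ∀ K, μ1 K = ∑ ℓ ∈ Finset.range (K + 1),
        (ENNReal.ofReal ((K.choose ℓ : ℝ) * PD ^ ℓ * (1 - PD) ^ (K - ℓ))) •
          Measure.pi (fun _ : Fin (2 * N) => gaussianReal 0 (v K ℓ).toNNReal)) :
    (∀ f : BoundedContinuousFunction (Fin (2 * N) → ℝ) ℝ,
        Tendsto (fun K : ℕ => ∫ x, f x ∂(μ0 K)) atTop
          (nhds (∫ x, f x ∂(Measure.pi (fun _ : Fin (2 * N) =>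
            gaussianReal 0 (Real.toNNReal (1 / (2 * N)))))))) ∧
    (∀ f : BoundedContinuousFunction (Fin (2 * N) → ℝ) ℝ,
        Tendsto (fun K : ℕ => ∫ x, f x ∂(μ1 K)) atTop
          (nhds (∫ x, f x ∂(Measure.pi (fun _ : Fin (2 * N) =>
            gaussianReal 0 (Real.toNNReal (PD / (2 * PF * N)))))))) :=
  stmt_8_general N σh2 σw2 hσh PF PD hPF hPD v hv μ0 μ1 hμ0 hμ1
end
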